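/- arXiv:1602.06933 — 3 statements merged into one kernel-verified Lean document; each statement's English description precedes it below -/
import Mathlib

section
/- Let 𝕂 = ℝ or ℂ and let k be an odd positive integer. There are no formal power series x(t), y(t), z(t) ∈ 𝕂⟦t⟧ with x(t) ≡ t (mod t²), y(t) ≡ 0 (mod t²), and z(t) ≡ 0 (mod t²) such that z(t)² = x(t)·(y(t)⁴ + x(t)^{2k}). In particular, the truncation at order 1 of the arc t ↦ (t,0,0), which lies on X = {(x,y,z) : z² − xy⁴ = 0}, is not the truncation at order 1 of any analytic arc lying on X_k = {(x,y,z) : z² − x(y⁴ + x^{2k}) = 0}. -/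
/-!
Compare vanishing orders at `t = 0`. The order of `z²` is even. Since `k` is odd, the orders
`4 · ord y` and `2k` of `y⁴` and `x^{2k}` differ, so `y⁴ + x^{2k}` has the finite even order
`min (4 · ord y) (2k)`, and `x (y⁴ + x^{2k})` has odd order. This works verbatim for the
`t`-adic order of power series and for the vanishing order of analytic functions.
-/

open Filter PowerSeries
open scoped Topology

lemma ENat.two_mul_ne_one_add_two_mul_natCast (n : ℕ∞) (j : ℕ) : 2 * n ≠ 1 + 2 * j := by
  induction n using ENat.recTopCoe with
  | top => rw [ENat.mul_top two_ne_zero]; exact_mod_cast ENat.top_ne_natCast (1 + 2 * j)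
  | coe n => exact_mod_cast (by omega : 2 * n ≠ 1 + 2 * j)

lemma ENat.two_mul_ne_one_add_min_four_mul (k : ℕ) (m n : ℕ∞) :
    2 * n ≠ 1 + min (4 * m) (2 * k) := by
  obtain ⟨j, hj⟩ : ∃ j : ℕ, (j : ℕ∞) = min (2 * m) k :=
    ENat.ne_top_iff_exists.1 (ne_top_of_le_ne_top (ENat.natCast_ne_top k) (min_le_right _ _))
  rw [show (4 : ℕ∞) = 2 * 2 by norm_num, mul_assoc, min_mul_mul_left, ← hj]
  exact ENat.two_mul_ne_one_add_two_mul_natCast n j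

lemma ENat.four_mul_ne_two_mul_of_odd {k : ℕ} (hk : Odd k) (m : ℕ∞) : 4 * m ≠ 2 * k := by
  obtain ⟨r, rfl⟩ := hk
  induction m using ENat.recTopCoe with
  | top => rw [ENat.mul_top four_ne_zero]; exact_mod_cast ENat.top_ne_natCast (2 * (2 * r + 1))
  | coe m => exact_mod_cast (by omega : 4 * m ≠ 2 * (2 * r + 1))

theorem PowerSeries.sq_ne_mul_pow_four_add_pow {R : Type*} [CommRing R] [IsDomain R] {k : ℕ}
    (hk : Odd k) {x : R⟦X⟧} (hx : x.order = 1) (y z : R⟦X⟧) :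
    z ^ 2 ≠ x * (y ^ 4 + x ^ (2 * k)) := by
  intro h
  have hne : (y ^ 4).order ≠ (x ^ (2 * k)).order := by
    simpa [order_pow, hx] using ENat.four_mul_ne_two_mul_of_odd hk y.order
  apply ENat.two_mul_ne_one_add_min_four_mul k y.order z.order
  simpa [order_pow, order_mul, order_add_of_order_ne _ _ hne, hx] using congrArg order h

/-- `analyticOrderAt_mul` covers only `𝕜 → 𝕜`; real arcs in `ℂ` need this version. -/
theorem analyticOrderAt_mul_of_normedAlgebra {𝕜 A : Type*} [NontriviallyNormedField 𝕜]
    [NormedDivisionRing A] [NormedAlgebra 𝕜 A] {f g : 𝕜 → A} {z₀ : 𝕜}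
    (hf : AnalyticAt 𝕜 f z₀) (hg : AnalyticAt 𝕜 g z₀) :
    analyticOrderAt (f * g) z₀ = analyticOrderAt f z₀ + analyticOrderAt g z₀ := by
  by_cases hf' : analyticOrderAt f z₀ = ⊤
  · rw [hf', top_add, analyticOrderAt_eq_top]
    filter_upwards [analyticOrderAt_eq_top.1 hf'] with z hz
    simp [hz]
  by_cases hg' : analyticOrderAt g z₀ = ⊤
  · rw [hg', add_top, analyticOrderAt_eq_top]
    filter_upwards [analyticOrderAt_eq_top.1 hg'] with z hz
    simp [hz]
  obtain ⟨F, hF, hF0, hfF⟩ := hf.analyticOrderAt_ne_top.1 hf'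
  obtain ⟨G, hG, hG0, hgG⟩ := hg.analyticOrderAt_ne_top.1 hg'
  rw [← Nat.cast_analyticOrderNatAt hf', ← Nat.cast_analyticOrderNatAt hg', ← ENat.natCast_add,
    (hf.mul hg).analyticOrderAt_eq_natCast]
  refine ⟨F * G, hF.mul hG, mul_ne_zero hF0 hG0, ?_⟩
  filter_upwards [hfF, hgG] with z h₁ h₂
  rw [Pi.mul_apply, h₁, h₂, smul_mul_smul_comm, pow_add, Pi.mul_apply]

theorem analyticOrderAt_pow_of_normedAlgebra {𝕜 A : Type*} [NontriviallyNormedField 𝕜]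
    [NormedDivisionRing A] [NormedAlgebra 𝕜 A] {f : 𝕜 → A} {z₀ : 𝕜}
    (hf : AnalyticAt 𝕜 f z₀) (n : ℕ) :
    analyticOrderAt (f ^ n) z₀ = n • analyticOrderAt f z₀ := by
  induction n with
  | zero => simp [analyticOrderAt_eq_zero]
  | succ n ih => rw [pow_succ, analyticOrderAt_mul_of_normedAlgebra (hf.pow n) hf, ih, succ_nsmul]

theorem sq_not_eventuallyEq_mul_pow_four_add_pow {𝕜 A : Type*}
    [NontriviallyNormedField 𝕜] [NormedDivisionRing A] [NormedAlgebra 𝕜 A] {k : ℕ} (hk : Odd k)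
    {x y z : 𝕜 → A} {z₀ : 𝕜} (hxo : analyticOrderAt x z₀ = 1) (hy : AnalyticAt 𝕜 y z₀)
    (hz : AnalyticAt 𝕜 z z₀) :
    ¬ z ^ 2 =ᶠ[𝓝 z₀] x * (y ^ 4 + x ^ (2 * k)) := by
  intro h
  have hx : AnalyticAt 𝕜 x z₀ := (analyticOrderAt_ne_zero.1 (by simp [hxo])).1
  have hne : analyticOrderAt (y ^ 4) z₀ ≠ analyticOrderAt (x ^ (2 * k)) z₀ := by
    simpa [analyticOrderAt_pow_of_normedAlgebra, hx, hy, hxo] using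
      ENat.four_mul_ne_two_mul_of_odd hk (analyticOrderAt y z₀)
  apply ENat.two_mul_ne_one_add_min_four_mul k (analyticOrderAt y z₀) (analyticOrderAt z z₀)
  have hord := analyticOrderAt_congr h
  rw [analyticOrderAt_pow_of_normedAlgebra hz, analyticOrderAt_mul_of_normedAlgebra hx
    ((hy.pow 4).add (hx.pow _)), analyticOrderAt_add_of_ne hne,
    analyticOrderAt_pow_of_normedAlgebra hy, analyticOrderAt_pow_of_normedAlgebra hx, hxo] at hord
  simpa using hord

theorem no_formal_arc_on_Xk_general {𝕜 : Type*} [RCLike 𝕜] (k : ℕ) (hk : Odd k) :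
    (¬ ∃ x y z : PowerSeries 𝕜,
        PowerSeries.coeff (R := 𝕜) 0 x = 0 ∧ PowerSeries.coeff (R := 𝕜) 1 x = 1 ∧
        PowerSeries.coeff (R := 𝕜) 0 y = 0 ∧ PowerSeries.coeff (R := 𝕜) 1 y = 0 ∧
        PowerSeries.coeff (R := 𝕜) 0 z = 0 ∧ PowerSeries.coeff (R := 𝕜) 1 z = 0 ∧
        z ^ 2 = x * (y ^ 4 + x ^ (2 * k)))
    ∧
    (¬ ∃ (ε : ℝ) (γ : ℝ → Fin 3 → 𝕜), 0 < ε ∧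
        AnalyticOnNhd ℝ γ (Set.Ioo (-ε) ε) ∧
        γ 0 = 0 ∧
        -- the truncation of γ at order 1 is the arc t ↦ (t, 0, 0)
        deriv γ 0 = (fun i => if i = 0 then 1 else 0) ∧
        -- γ lies on X_k
        (∀ t ∈ Set.Ioo (-ε) ε,
          (γ t 2) ^ 2 = γ t 0 * ((γ t 1) ^ 4 + (γ t 0) ^ (2 * k)))) := by
  refine ⟨?_, ?_⟩
  · rintro ⟨x, y, z, hx0, hx1, -, -, -, -, h⟩
    have hx : x.order = 1 := by
      exact_mod_cast order_eq_nat (n := 1) |>.2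
        ⟨by simp [hx1], fun i hi => by rwa [Nat.lt_one_iff.1 hi]⟩
    exact sq_ne_mul_pow_four_add_pow hk hx y z h
  · rintro ⟨ε, γ, hε, hγ, hγ0, hγ', hγXk⟩
    have hcomp : ∀ i, AnalyticAt ℝ (fun t => γ t i) 0 :=
      analyticAt_pi_iff.1 (hγ 0 ⟨by linarith, hε⟩)
    have hderiv : deriv (fun t => γ t 0) 0 = 1 := by
      simpa using congrFun ((deriv_pi fun i => (hcomp i).differentiableAt).symm.trans hγ') 0
    have hx : analyticOrderAt (fun t => γ t 0) 0 = 1 :=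
      (hcomp 0).analyticOrderAt_eq_one_of_zero_deriv_ne_zero (by simp [hγ0]) (by simp [hderiv])
    refine sq_not_eventuallyEq_mul_pow_four_add_pow hk hx (hcomp 1) (hcomp 2) ?_
    filter_upwards [Ioo_mem_nhds (neg_lt_zero.2 hε) hε] with t ht
    simpa using hγXk t ht

/-- **No formal solution** (`𝕜 = ℝ` or `ℂ`): for odd `k ≥ 1` there are no formal power
series `x(t) ≡ t`, `y(t) ≡ 0`, `z(t) ≡ 0 (mod t²)` with `z² = x·(y⁴ + x^{2k})`.
In particular the order-1 truncation `t ↦ (t,0,0)` of an arc on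
`X = {z² = x y⁴}` is not the order-1 truncation of any analytic arc on
`X_k = {z² = x (y⁴ + x^{2k})}`. -/
theorem no_formal_arc_on_Xk {𝕜 : Type*} [RCLike 𝕜] (k : ℕ) (hk : Odd k) (hk1 : 1 ≤ k) :
    (¬ ∃ x y z : PowerSeries 𝕜,
        PowerSeries.coeff (R := 𝕜) 0 x = 0 ∧ PowerSeries.coeff (R := 𝕜) 1 x = 1 ∧
        PowerSeries.coeff (R := 𝕜) 0 y = 0 ∧ PowerSeries.coeff (R := 𝕜) 1 y = 0 ∧
        PowerSeries.coeff (R := 𝕜) 0 z = 0 ∧ PowerSeries.coeff (R := 𝕜) 1 z = 0 ∧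
        z ^ 2 = x * (y ^ 4 + x ^ (2 * k)))
    ∧
    (¬ ∃ (ε : ℝ) (γ : ℝ → Fin 3 → 𝕜), 0 < ε ∧
        AnalyticOnNhd ℝ γ (Set.Ioo (-ε) ε) ∧
        γ 0 = 0 ∧
        -- the truncation of γ at order 1 is the arc t ↦ (t, 0, 0)
        deriv γ 0 = (fun i => if i = 0 then 1 else 0) ∧
        -- γ lies on X_k
        (∀ t ∈ Set.Ioo (-ε) ε,
          (γ t 2) ^ 2 = γ t 0 * ((γ t 1) ^ 4 + (γ t 0) ^ (2 * k)))) :=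
  no_formal_arc_on_Xk_general k hk
end

section
/- Let p ≥ 1 and T₁,…,T_p ∈ ℂ. For 1 ≤ j ≤ p define the generalized discriminant Δⱼ = Σ_{(r₁,…,r_{j−1})} ∏_{k<l, k,l ∉ {r₁,…,r_{j−1}}} (T_k − T_l)², where the sum ranges over all (j−1)-tuples of pairwise distinct indices r₁,…,r_{j−1} ∈ {1,…,p}. Then for 0 ≤ j ≤ p−1, the set {T₁,…,T_p} has exactly p − j distinct elements if and only if Δ₁ = Δ₂ = ⋯ = Δⱼ = 0 and Δ_{j+1} ≠ 0. In particular Δ₁ is the usual discriminant expression ∏_{k<l}(T_k − T_l)², and a monic polynomial of degree p with roots T₁,…,T_p (with multiplicity) has exactly p − j distinct complex roots if and only if Δ₁ = ⋯ = Δⱼ = 0 and Δ_{j+1} ≠ 0. -/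
open Set

/-- The `j`-th generalized discriminant of `T₁,…,T_p`:
`Δⱼ = ∑_{(r₁,…,r_{j-1})} ∏_{k<l, k,l ∉ {r₁,…,r_{j-1}}} (T_k − T_l)²`, the sum ranging
over all `(j-1)`-tuples of pairwise distinct indices in `{1,…,p}` (i.e. embeddings
`Fin (j-1) ↪ Fin p`); an empty product equals `1`. -/
noncomputable def genDisc (p : ℕ) (T : Fin p → ℂ) (j : ℕ) : ℂ :=
  ∑ r : Fin (j - 1) ↪ Fin p,
    ∏ q ∈ Finset.univ.filter
        (fun q : Fin p × Fin p => q.1 < q.2 ∧ (∀ a, r a ≠ q.1) ∧ (∀ a, r a ≠ q.2)),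
      (T q.1 - T q.2) ^ 2

namespace GenDiscAux

variable {p m : ℕ}

noncomputable def pairsProd (T : Fin p → ℂ) (S : Finset (Fin p)) : ℂ :=
  ∏ q ∈ Finset.univ.filter (fun q : Fin p × Fin p => q.1 < q.2 ∧ q.1 ∈ S ∧ q.2 ∈ S),
    (T q.1 - T q.2) ^ 2

lemma genDisc_eq_sum (T : Fin p → ℂ) (j : ℕ) :
    genDisc p T j
      = ∑ r : Fin (j - 1) ↪ Fin p,
          pairsProd T (Finset.univ.filter fun k => ∀ a, r a ≠ k) := by
  unfold genDisc pairsProd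
  refine Finset.sum_congr rfl fun r _ => ?_
  refine Finset.prod_congr ?_ fun _ _ => rfl
  ext q
  simp only [Finset.mem_filter, Finset.mem_univ, true_and]

lemma card_complEmb (r : Fin m ↪ Fin p) :
    (Finset.univ.filter fun k => ∀ a, r a ≠ k).card = p - m := by
  have h : (Finset.univ.filter fun k => ∀ a, r a ≠ k) = (Finset.univ.map r)ᶜ := by
    ext k
    simp [eq_comm]
  rw [h, Finset.card_compl, Finset.card_map, Finset.card_univ]
  simp

lemma pairsProd_eq_zero {T : Fin p → ℂ} {S : Finset (Fin p)}
    (h : ¬ Set.InjOn T ↑S) : pairsProd T S = 0 := by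
  rw [Set.InjOn] at h; push_neg at h
  obtain ⟨k, hk, l, hl, hT, hne⟩ := h
  simp only [Finset.mem_coe] at hk hl
  rcases lt_or_gt_of_ne hne with hlt | hlt
  · exact Finset.prod_eq_zero (i := (k, l))
      (by simp [hk, hl, hlt]) (by simp [hT])
  · exact Finset.prod_eq_zero (i := (l, k))
      (by simp [hk, hl, hlt]) (by simp [hT])

lemma pairsProd_ne_zero {T : Fin p → ℂ} {S : Finset (Fin p)}
    (h : Set.InjOn T ↑S) : pairsProd T S ≠ 0 := by
  rw [pairsProd, Finset.prod_ne_zero_iff]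
  intro q hq
  simp only [Finset.mem_filter, Finset.mem_univ, true_and] at hq
  obtain ⟨hlt, h1, h2⟩ := hq
  have : T q.1 ≠ T q.2 := fun he => hlt.ne (h h1 h2 he)
  exact pow_ne_zero _ (sub_ne_zero.2 this)

lemma pairsProd_congr {T : Fin p → ℂ} {S S' : Finset (Fin p)}
    (hS : Set.InjOn T ↑S) (hS' : Set.InjOn T ↑S')
    (him : S.image T = S'.image T) : pairsProd T S = pairsProd T S' := by
  rcases Nat.eq_zero_or_pos p with rfl | hp
  · have h1 : S = S' := by
      have e : ∀ (A : Finset (Fin 0)), A = ∅ :=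
        fun A => Finset.eq_empty_of_forall_notMem fun x => x.elim0
      rw [e S, e S']
    rw [h1]
  haveI : Nonempty (Fin p) := ⟨⟨0, hp⟩⟩
  classical
  -- φ : S → S', ψ : S' → S
  set φ : Fin p → Fin p := fun k => Function.invFunOn T ↑S' (T k) with hφdef
  set ψ : Fin p → Fin p := fun k => Function.invFunOn T ↑S (T k) with hψdef
  have hφex : ∀ k ∈ S, ∃ x ∈ (↑S' : Set (Fin p)), T x = T k := by
    intro k hk
    have : T k ∈ S'.image T := him ▸ Finset.mem_image_of_mem T hk
    obtain ⟨x, hx, hxe⟩ := Finset.mem_image.1 this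
    exact ⟨x, hx, hxe⟩
  have hψex : ∀ k ∈ S', ∃ x ∈ (↑S : Set (Fin p)), T x = T k := by
    intro k hk
    have : T k ∈ S.image T := him ▸ Finset.mem_image_of_mem T hk
    obtain ⟨x, hx, hxe⟩ := Finset.mem_image.1 this
    exact ⟨x, hx, hxe⟩
  have hφmem : ∀ k ∈ S, φ k ∈ S' := fun k hk => Function.invFunOn_mem (hφex k hk)
  have hφval : ∀ k ∈ S, T (φ k) = T k := fun k hk => Function.invFunOn_eq (hφex k hk)
  have hψmem : ∀ k ∈ S', ψ k ∈ S := fun k hk => Function.invFunOn_mem (hψex k hk)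
  have hψval : ∀ k ∈ S', T (ψ k) = T k := fun k hk => Function.invFunOn_eq (hψex k hk)
  have hψφ : ∀ k ∈ S, ψ (φ k) = k := by
    intro k hk
    have h1 := hψval _ (hφmem k hk)
    rw [hφval k hk] at h1
    exact hS (hψmem _ (hφmem k hk)) hk h1
  have hφψ : ∀ k ∈ S', φ (ψ k) = k := by
    intro k hk
    have h1 := hφval _ (hψmem k hk)
    rw [hψval k hk] at h1
    exact hS' (hφmem _ (hψmem k hk)) hk h1
  have hφne : ∀ k ∈ S, ∀ l ∈ S, k ≠ l → φ k ≠ φ l := by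
    intro k hk l hl hne he
    apply hne
    have : T k = T l := by rw [← hφval k hk, ← hφval l hl, he]
    exact hS hk hl this
  have hψne : ∀ k ∈ S', ∀ l ∈ S', k ≠ l → ψ k ≠ ψ l := by
    intro k hk l hl hne he
    apply hne
    have : T k = T l := by rw [← hψval k hk, ← hψval l hl, he]
    exact hS' hk hl this
  unfold pairsProd
  refine Finset.prod_nbij'
    (fun q => if φ q.1 < φ q.2 then (φ q.1, φ q.2) else (φ q.2, φ q.1))
    (fun q => if ψ q.1 < ψ q.2 then (ψ q.1, ψ q.2) else (ψ q.2, ψ q.1))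
    ?_ ?_ ?_ ?_ ?_
  · intro q hq
    simp only [Finset.mem_filter, Finset.mem_univ, true_and] at hq ⊢
    obtain ⟨hlt, h1, h2⟩ := hq
    have hne := hφne _ h1 _ h2 hlt.ne
    split_ifs with h
    · exact ⟨h, hφmem _ h1, hφmem _ h2⟩
    · exact ⟨lt_of_le_of_ne (not_lt.1 h) hne.symm, hφmem _ h2, hφmem _ h1⟩
  · intro q hq
    simp only [Finset.mem_filter, Finset.mem_univ, true_and] at hq ⊢
    obtain ⟨hlt, h1, h2⟩ := hq
    have hne := hψne _ h1 _ h2 hlt.ne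
    split_ifs with h
    · exact ⟨h, hψmem _ h1, hψmem _ h2⟩
    · exact ⟨lt_of_le_of_ne (not_lt.1 h) hne.symm, hψmem _ h2, hψmem _ h1⟩
  · intro q hq
    simp only [Finset.mem_filter, Finset.mem_univ, true_and] at hq
    obtain ⟨hlt, h1, h2⟩ := hq
    split_ifs with h h' h'
    · simp [hψφ _ h1, hψφ _ h2]
    · simp only [hψφ _ h1, hψφ _ h2] at h' ⊢
      exact absurd hlt (not_lt.2 (le_of_not_gt h'))
    · simp only [hψφ _ h1, hψφ _ h2] at h' ⊢
      exact absurd h' (not_lt.2 hlt.le)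
    · simp [hψφ _ h1, hψφ _ h2]
  · intro q hq
    simp only [Finset.mem_filter, Finset.mem_univ, true_and] at hq
    obtain ⟨hlt, h1, h2⟩ := hq
    split_ifs with h h' h'
    · simp [hφψ _ h1, hφψ _ h2]
    · simp only [hφψ _ h1, hφψ _ h2] at h' ⊢
      exact absurd hlt (not_lt.2 (le_of_not_gt h'))
    · simp only [hφψ _ h1, hφψ _ h2] at h' ⊢
      exact absurd h' (not_lt.2 hlt.le)
    · simp [hφψ _ h1, hφψ _ h2]
  · intro q hq
    simp only [Finset.mem_filter, Finset.mem_univ, true_and] at hq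
    obtain ⟨hlt, h1, h2⟩ := hq
    split_ifs with h
    · simp only [hφval _ h1, hφval _ h2]
    · simp only [hφval _ h1, hφval _ h2]
      ring

lemma genDisc_zero (T : Fin p → ℂ) {i : ℕ} (h1 : 1 ≤ i)
    (h2 : i ≤ p - (Finset.univ.image T).card) : genDisc p T i = 0 := by
  rw [genDisc_eq_sum]
  refine Finset.sum_eq_zero fun r _ => ?_
  apply pairsProd_eq_zero
  intro hinj
  have hcard := card_complEmb r
  have himle : ((Finset.univ.filter fun k => ∀ a, r a ≠ k).image T).card
      ≤ (Finset.univ.image T).card :=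
    Finset.card_le_card (Finset.image_subset_image (Finset.subset_univ _))
  rw [Finset.card_image_of_injOn hinj, hcard] at himle
  have hple : i - 1 ≤ p := by
    calc i - 1 ≤ p - (Finset.univ.image T).card := by omega
    _ ≤ p := Nat.sub_le _ _
  omega

lemma genDisc_nonzero (hp : 1 ≤ p) (T : Fin p → ℂ) :
    genDisc p T (p - (Finset.univ.image T).card + 1) ≠ 0 := by
  classical
  haveI : Nonempty (Fin p) := ⟨⟨0, hp⟩⟩
  set d := (Finset.univ.image T).card with hd
  have hd1 : 1 ≤ d := Finset.card_pos.2 (Finset.univ_nonempty.image T)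
  have hdp : d ≤ p := by
    calc d ≤ Finset.univ.card := Finset.card_image_le
    _ = p := by simp
  set m := p - d with hm
  have hpm : p - m = d := by omega
  -- canonical transversal t₀
  set g : ℂ → Fin p := fun a => Function.invFun T a with hgdef
  have hg : ∀ a ∈ Finset.univ.image T, T (g a) = a := by
    intro a ha
    obtain ⟨i, _, hi⟩ := Finset.mem_image.1 ha
    exact Function.invFun_eq ⟨i, hi⟩
  set t₀ := (Finset.univ.image T).image g with ht₀
  have hinj₀ : Set.InjOn T ↑t₀ := by
    intro x hx y hy hxy
    simp only [Finset.mem_coe] at hx hy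
    obtain ⟨a, ha, rfl⟩ := Finset.mem_image.1 hx
    obtain ⟨b, hb, rfl⟩ := Finset.mem_image.1 hy
    rw [hg a ha, hg b hb] at hxy
    rw [hxy]
  have him₀ : t₀.image T = Finset.univ.image T := by
    rw [ht₀, Finset.image_image]
    calc (Finset.univ.image T).image (T ∘ g)
        = (Finset.univ.image T).image id := Finset.image_congr (fun a ha => hg a ha)
      _ = _ := Finset.image_id
  have hcard₀ : t₀.card = d := by
    rw [← Finset.card_image_of_injOn hinj₀, him₀]
  -- the canonical embedding r₀ with complement t₀
  have hcc : t₀ᶜ.card = m := by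
    rw [Finset.card_compl, hcard₀]
    simp [hm]
  let e : ↥(t₀ᶜ) ≃ Fin m := t₀ᶜ.equivFinOfCardEq hcc
  let r₀ : Fin m ↪ Fin p := e.symm.toEmbedding.trans (Function.Embedding.subtype _)
  have hS₀ : (Finset.univ.filter fun k => ∀ a, r₀ a ≠ k) = t₀ := by
    ext k
    simp only [Finset.mem_filter, Finset.mem_univ, true_and]
    constructor
    · intro h
      by_contra hk
      have hk' : k ∈ t₀ᶜ := Finset.mem_compl.2 hk
      refine h (e ⟨k, hk'⟩) ?_
      show ((e.symm (e ⟨k, hk'⟩) : ↥(t₀ᶜ)) : Fin p) = k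
      rw [Equiv.symm_apply_apply]
    · intro hk a hak
      have hmem : (r₀ a : Fin p) ∈ t₀ᶜ := (e.symm a).2
      rw [hak] at hmem
      exact Finset.mem_compl.1 hmem hk
  -- all injective-complement terms are equal
  have hkey : ∀ r : Fin m ↪ Fin p,
      Set.InjOn T ↑(Finset.univ.filter fun k => ∀ a, r a ≠ k) →
      pairsProd T (Finset.univ.filter fun k => ∀ a, r a ≠ k) = pairsProd T t₀ := by
    intro r hinj
    refine pairsProd_congr hinj hinj₀ ?_
    rw [him₀]
    refine Finset.eq_of_subset_of_card_le
      (Finset.image_subset_image (Finset.subset_univ _)) ?_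
    rw [Finset.card_image_of_injOn hinj, card_complEmb r, hpm]
  -- compute the sum
  have hEq : genDisc p T (m + 1)
      = ((Finset.univ.filter fun r : Fin m ↪ Fin p =>
            Set.InjOn T ↑(Finset.univ.filter fun k => ∀ a, r a ≠ k)).card : ℂ)
          * pairsProd T t₀ := by
    rw [genDisc_eq_sum]
    show (∑ r : Fin m ↪ Fin p,
        pairsProd T (Finset.univ.filter fun k => ∀ a, r a ≠ k)) = _
    rw [← Finset.sum_filter_add_sum_filter_not Finset.univ
      (fun r : Fin m ↪ Fin p =>
        Set.InjOn T ↑(Finset.univ.filter fun k => ∀ a, r a ≠ k))]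
    rw [Finset.sum_eq_zero (f := fun r : Fin m ↪ Fin p =>
        pairsProd T (Finset.univ.filter fun k => ∀ a, r a ≠ k))
      (fun r hr => pairsProd_eq_zero (Finset.mem_filter.1 hr).2), add_zero]
    rw [Finset.sum_congr rfl (fun r hr => hkey r (Finset.mem_filter.1 hr).2)]
    rw [Finset.sum_const, nsmul_eq_mul]

  rw [hEq]
  refine mul_ne_zero ?_ (pairsProd_ne_zero hinj₀)
  rw [Nat.cast_ne_zero]
  refine Finset.card_ne_zero_of_mem (a := r₀) ?_
  rw [Finset.mem_filter]
  exact ⟨Finset.mem_univ _, by rw [hS₀]; exact hinj₀⟩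

end GenDiscAux

/-- **Generalized discriminants detect the number of distinct roots.**
`Δ₁` is the usual discriminant expression `∏_{k<l}(T_k − T_l)²`; for `0 ≤ j ≤ p−1`,
`{T₁,…,T_p}` has exactly `p − j` distinct elements iff `Δ₁ = ⋯ = Δⱼ = 0` and
`Δ_{j+1} ≠ 0`; and the monic polynomial `∏ᵢ (X − Tᵢ)` has exactly `p − j` distinct
complex roots iff `Δ₁ = ⋯ = Δⱼ = 0` and `Δ_{j+1} ≠ 0`. -/
theorem genDisc_counts_distinct_roots (p : ℕ) (hp : 1 ≤ p) (T : Fin p → ℂ) :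
    (genDisc p T 1 =
      ∏ q ∈ Finset.univ.filter (fun q : Fin p × Fin p => q.1 < q.2),
        (T q.1 - T q.2) ^ 2) ∧
    (∀ j : ℕ, j ≤ p - 1 →
      ((Set.range T).ncard = p - j ↔
        ((∀ i, 1 ≤ i → i ≤ j → genDisc p T i = 0) ∧ genDisc p T (j + 1) ≠ 0))) ∧
    (∀ j : ℕ, j ≤ p - 1 →
      ((Polynomial.roots (∏ i, (Polynomial.X - Polynomial.C (T i)))).toFinset.card
          = p - j ↔
        ((∀ i, 1 ≤ i → i ≤ j → genDisc p T i = 0) ∧ genDisc p T (j + 1) ≠ 0))) := by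
  haveI : Nonempty (Fin p) := ⟨⟨0, hp⟩⟩
  set d := (Finset.univ.image T).card with hd
  have hd1 : 1 ≤ d := Finset.card_pos.2 (Finset.univ_nonempty.image T)
  have hdp : d ≤ p := by
    calc d ≤ Finset.univ.card := Finset.card_image_le
    _ = p := by simp
  -- `ncard (range T) = d`
  have hncard : (Set.range T).ncard = d := by
    have hr : Set.range T = ↑(Finset.univ.image T) := by
      ext x; simp
    rw [hr, Set.ncard_coe_finset]
  -- number of distinct roots = d
  have hroots : (Polynomial.roots
      (∏ i, (Polynomial.X - Polynomial.C (T i)))).toFinset.card = d := by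
    have hne : ∀ i : Fin p, (Polynomial.X - Polynomial.C (T i)) ≠ 0 :=
      fun i => Polynomial.X_sub_C_ne_zero _
    have hprodne : (∏ i, (Polynomial.X - Polynomial.C (T i))) ≠ 0 :=
      Finset.prod_ne_zero_iff.2 fun i _ => hne i
    have h1 : (∏ i, (Polynomial.X - Polynomial.C (T i))).roots
        = Finset.univ.val.map T := by
      rw [Polynomial.roots_prod _ _ hprodne]
      simp [Polynomial.roots_X_sub_C, Multiset.bind_singleton]
    rw [h1, Multiset.toFinset_map]
    simp [hd]
  -- the core equivalence
  have hcore : ∀ j : ℕ, j ≤ p - 1 →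
      (d = p - j ↔
        ((∀ i, 1 ≤ i → i ≤ j → genDisc p T i = 0) ∧ genDisc p T (j + 1) ≠ 0)) := by
    intro j hj
    constructor
    · intro hdj
      have hjm : j = p - d := by omega
      constructor
      · intro i hi1 hi2
        exact GenDiscAux.genDisc_zero T hi1 (by omega)
      · rw [show j + 1 = p - d + 1 by omega]
        exact GenDiscAux.genDisc_nonzero hp T
    · rintro ⟨hz, hnz⟩
      by_contra hne
      rcases lt_or_gt_of_ne (show j ≠ p - d by omega) with h | h
      · exact hnz (GenDiscAux.genDisc_zero T (by omega) (by omega))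
      · exact GenDiscAux.genDisc_nonzero hp T (hz (p - d + 1) (by omega) (by omega))
  refine ⟨?_, fun j hj => by rw [hncard]; exact hcore j hj,
    fun j hj => by rw [hroots]; exact hcore j hj⟩
  -- Δ₁ is the usual discriminant
  haveI : Unique (Fin 0 ↪ Fin p) :=
    ⟨⟨Function.Embedding.ofIsEmpty⟩, fun r => by ext a; exact a.elim0⟩
  unfold genDisc
  rw [Finset.univ_unique, Finset.sum_singleton]
  refine Finset.prod_congr ?_ fun _ _ => rfl
  ext q
  simp
end

section
/- Let E = E' × E'' ⊆ ℂ^{n−1} × ℂ be open with E'' convex, let δ > 0, and let τ : E → ℂ be holomorphic with sup_{x ∈ E} |τ(x)| < δ and with ∂τ/∂xₙ bounded on E. Then there exists m₀ ∈ ℕ such that for every m ≥ m₀ the map φₘ : E → ℂⁿ defined by φₘ(x₁,…,xₙ) = (x₁,…,x_{n−1}, xₙ + (τ(x)/δ)ᵐ) is injective on E. -/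
open Set Filter Topology

/-- **Injectivity of the shear maps `φₘ`.** Let `E = E' × E'' ⊆ ℂ^{n} × ℂ` be open with
`E''` convex, `δ > 0`, and let `τ : E → ℂ` be holomorphic with `sup_E |τ| < δ` and with
`∂τ/∂x_{n+1}` bounded on `E`. Then for all sufficiently large `m`, the map
`φₘ(x', x_{n+1}) = (x', x_{n+1} + (τ(x)/δ)ᵐ)` is injective on `E`. -/
theorem shear_map_eventually_injective
    (n : ℕ) (E' : Set (Fin n → ℂ)) (E'' : Set ℂ)
    (hE' : IsOpen E') (hE'' : IsOpen E'') (hconv : Convex ℝ E'')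
    (δ : ℝ) (hδ : 0 < δ)
    (τ : (Fin n → ℂ) × ℂ → ℂ) (hτ : AnalyticOnNhd ℂ τ (E' ×ˢ E''))
    -- sup_{x ∈ E} |τ(x)| < δ
    (hsup : ∃ δ' : ℝ, δ' < δ ∧ ∀ x ∈ E' ×ˢ E'', ‖τ x‖ ≤ δ')
    -- ∂τ/∂xₙ is bounded on E
    (hder : ∃ M : ℝ, ∀ x ∈ E' ×ˢ E'', ‖deriv (fun z : ℂ => τ (x.1, z)) x.2‖ ≤ M) :
    ∃ m₀ : ℕ, ∀ m : ℕ, m₀ ≤ m →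
      Set.InjOn (fun x : (Fin n → ℂ) × ℂ => (x.1, x.2 + (τ x / (δ : ℂ)) ^ m))
        (E' ×ˢ E'') := by
  obtain ⟨δ', hδ', hτb⟩ := hsup
  obtain ⟨M, hM⟩ := hder
  set r : ℝ := max δ' 0 / δ with hr_def
  have hr0 : 0 ≤ r := div_nonneg (le_max_right _ _) hδ.le
  have hr1 : r < 1 := by
    rw [hr_def, div_lt_one hδ]
    exact max_lt hδ' hδ
  set M' : ℝ := max M 0 with hM'_def
  have hM'0 : 0 ≤ M' := le_max_right _ _
  -- the sequence (k+1) * r^k * (M'/δ) tends to 0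
  have htend : Tendsto (fun k : ℕ => ((k : ℝ) + 1) * r ^ k * (M' / δ)) atTop (𝓝 0) := by
    have h1 : Tendsto (fun k : ℕ => (k : ℝ) * r ^ k) atTop (𝓝 0) :=
      tendsto_self_mul_const_pow_of_lt_one hr0 hr1
    have h2 : Tendsto (fun k : ℕ => r ^ k) atTop (𝓝 0) :=
      tendsto_pow_atTop_nhds_zero_of_lt_one hr0 hr1
    have h3 : Tendsto (fun k : ℕ => ((k : ℝ) + 1) * r ^ k) atTop (𝓝 0) := by
      have := h1.add h2
      simpa [add_mul] using this
    simpa using h3.mul_const (M' / δ)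
  have hev : ∀ᶠ k : ℕ in atTop, ((k : ℝ) + 1) * r ^ k * (M' / δ) < 1 :=
    (tendsto_order.1 htend).2 1 one_pos
  obtain ⟨K, hK⟩ := hev.exists_forall_of_atTop
  refine ⟨K + 1, fun m hm => ?_⟩
  set C : ℝ := (m : ℝ) * r ^ (m - 1) * (M' / δ) with hC_def
  have hm1 : 1 ≤ m := le_trans (Nat.le_add_left 1 K) hm
  have hC1 : C < 1 := by
    have hK' : K ≤ m - 1 := by omega
    have := hK (m - 1) hK'
    have hcast : ((m - 1 : ℕ) : ℝ) + 1 = (m : ℝ) := by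
      have : (m - 1) + 1 = m := by omega
      exact_mod_cast congrArg (Nat.cast : ℕ → ℝ) this
    rwa [hcast] at this
  have hC0 : 0 ≤ C :=
    mul_nonneg (mul_nonneg (Nat.cast_nonneg m) (pow_nonneg hr0 _)) (div_nonneg hM'0 hδ.le)
  -- the key Lipschitz estimate on slices
  rintro ⟨a', a⟩ ⟨ha', ha⟩ ⟨b', b⟩ ⟨hb', hb⟩ heq
  simp only [Prod.mk.injEq] at heq
  obtain ⟨h1, h2⟩ := heq
  subst h1
  -- now a' = b', need a = b
  have hslice : ∀ z ∈ E'', HasDerivAt (fun z : ℂ => (τ (a', z) / (δ : ℂ)) ^ m)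
      ((m : ℂ) * (τ (a', z) / (δ : ℂ)) ^ (m - 1) * (deriv (fun w : ℂ => τ (a', w)) z / (δ : ℂ))) z := by
    intro z hz
    have hmem : ((a', z) : (Fin n → ℂ) × ℂ) ∈ E' ×ˢ E'' := ⟨ha', hz⟩
    have hg : HasDerivAt (fun w : ℂ => τ (a', w)) (deriv (fun w : ℂ => τ (a', w)) z) z := by
      have : DifferentiableAt ℂ (fun w : ℂ => τ (a', w)) z := by
        have hcomp : AnalyticAt ℂ (fun w : ℂ => τ (a', w)) z :=
          (hτ _ hmem).comp ((analyticAt_const.prod analyticAt_id))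
        exact hcomp.differentiableAt
      exact this.hasDerivAt
    exact (hg.div_const (δ : ℂ)).pow m
  have hbound : ∀ z ∈ E'',
      ‖(m : ℂ) * (τ (a', z) / (δ : ℂ)) ^ (m - 1) * (deriv (fun w : ℂ => τ (a', w)) z / (δ : ℂ))‖ ≤ C := by
    intro z hz
    have hmem : ((a', z) : (Fin n → ℂ) × ℂ) ∈ E' ×ˢ E'' := ⟨ha', hz⟩
    have h1 : ‖τ (a', z) / (δ : ℂ)‖ ≤ r := by
      rw [norm_div, Complex.norm_real, Real.norm_of_nonneg hδ.le, hr_def]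
      gcongr
      exact le_trans (hτb _ hmem) (le_max_left _ _)
    have h2 : ‖deriv (fun w : ℂ => τ (a', w)) z‖ ≤ M' :=
      le_trans (hM (a', z) hmem) (le_max_left _ _)
    have h3 : ‖deriv (fun w : ℂ => τ (a', w)) z / (δ : ℂ)‖ ≤ M' / δ := by
      rw [norm_div, Complex.norm_real, Real.norm_of_nonneg hδ.le]
      gcongr
    rw [norm_mul, norm_mul, norm_pow, Complex.norm_natCast, hC_def]
    gcongr
  have hlip : ‖(fun z : ℂ => (τ (a', z) / (δ : ℂ)) ^ m) b - (fun z : ℂ => (τ (a', z) / (δ : ℂ)) ^ m) a‖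
      ≤ C * ‖b - a‖ :=
    hconv.norm_image_sub_le_of_norm_hasDerivWithin_le
      (fun z hz => (hslice z hz).hasDerivWithinAt) hbound ha hb
  simp only at hlip
  -- from h2 : a + (τ(a',a)/δ)^m = b + (τ(a',b)/δ)^m
  have hab : a - b = (τ (a', b) / (δ : ℂ)) ^ m - (τ (a', a) / (δ : ℂ)) ^ m := by
    linear_combination h2
  have : ‖a - b‖ ≤ C * ‖b - a‖ := by
    rw [hab]; simpa using hlip
  rw [show ‖b - a‖ = ‖a - b‖ from norm_sub_rev b a] at this
  have hz : ‖a - b‖ = 0 := by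
    by_contra h
    have hpos : 0 < ‖a - b‖ := lt_of_le_of_ne (norm_nonneg _) (Ne.symm h)
    nlinarith
  have : a = b := by rwa [norm_eq_zero, sub_eq_zero] at hz
  simp [this]
end
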